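/- arXiv:2212.14082 — 2 statements merged into one kernel-verified Lean document; each statement's English description precedes it below -/
import Mathlib

section
/- If G is a connected finite simple graph of order n with maximum degree Δ(G) ≥ n − 2, then χ_md(G) = χ(G). -/
open SimpleGraph

/-- A majority dominator coloring: a proper coloring such that every vertex `v`
dominates at least half of some (nonempty) color class, i.e. there is a color class `C`
with `|C| ≤ 2 * |C ∩ N[v]|`. -/
def SimpleGraph.IsMajorityDominatorColoring {V : Type*} (G : SimpleGraph V) {k : ℕ}
    (c : V → Fin k) : Prop :=
  (∀ u v, G.Adj u v → c u ≠ c v) ∧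
  ∀ v : V, ∃ i : Fin k,
    {u | c u = i}.Nonempty ∧
    {u | c u = i}.ncard ≤ 2 * {u | c u = i ∧ (u = v ∨ G.Adj v u)}.ncard

/-- The majority dominator chromatic number. -/
noncomputable def SimpleGraph.majorityDominatorChromaticNumber {V : Type*}
    (G : SimpleGraph V) : ℕ :=
  sInf {k | ∃ c : V → Fin k, G.IsMajorityDominatorColoring c}

/-! Let `w` be a vertex of maximum degree; at most one vertex other than `w` is not adjacent
to `w`. Given any proper coloring, recolor every non-neighbor of `w` with the color of `w`.
This stays proper, and the class of that color is `{w}` or `{w, x}` with `w`, `x` non-adjacent.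
Every vertex dominates at least half of this class: a neighbor of `w` dominates `w`, and a
non-neighbor of `w` dominates itself. So majority dominator colorings exist with exactly as
many colors as proper colorings. -/

namespace SimpleGraph

variable {V α : Type*} {G : SimpleGraph V} {w : V}

theorem encard_compl_neighborSet [Fintype V] [DecidableRel G.Adj] (w : V) :
    (G.neighborSet w)ᶜ.encard = (Fintype.card V - G.degree w : ℕ) := by
  rw [← Set.Finite.cast_ncard_eq (Set.toFinite _), Set.ncard_compl, Nat.card_eq_fintype_card,
    Set.ncard_eq_toFinset_card', Set.toFinset_card, card_neighborSet_eq_degree]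

theorem isIndepSet_compl_neighborSet (hw : (G.neighborSet w)ᶜ.encard ≤ 2) :
    G.IsIndepSet (G.neighborSet w)ᶜ := by
  intro u hu v hv huv hadj
  have huw : u ≠ w := by rintro rfl; exact hv hadj
  have hvw : v ≠ w := by rintro rfl; exact hu hadj.symm
  have hsub : ({w, u, v} : Set V) ⊆ (G.neighborSet w)ᶜ := by
    simp [Set.insert_subset_iff, hu, hv]
  have h3 := (Set.encard_le_encard hsub).trans hw
  rw [Set.encard_insert_of_notMem (by simp [huw.symm, hvw.symm]), Set.encard_pair huv] at h3
  exact absurd h3 (by decide)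

def Coloring.mergeNonNeighbors [DecidableRel G.Adj] (C : G.Coloring α) (w : V)
    (hw : G.IsIndepSet (G.neighborSet w)ᶜ) : G.Coloring α :=
  Coloring.mk (fun x => if G.Adj w x then C x else C w) fun {u v} huv => by
    by_cases hu : G.Adj w u <;> by_cases hv : G.Adj w v <;> simp only [hu, hv, if_true, if_false]
    · exact C.valid huv
    · exact (C.valid hu).symm
    · exact C.valid hv
    · exact absurd huv (hw hu hv (G.ne_of_adj huv))

theorem Coloring.mergeNonNeighbors_eq_iff [DecidableRel G.Adj] (C : G.Coloring α)
    (hw : G.IsIndepSet (G.neighborSet w)ᶜ) (x : V) :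
    C.mergeNonNeighbors w hw x = C w ↔ ¬ G.Adj w x := by
  change (if G.Adj w x then C x else C w) = C w ↔ _
  by_cases hx : G.Adj w x
  · simpa [hx] using (C.valid hx).symm
  · simp [hx]

theorem IsMajorityDominatorColoring.colorable {k : ℕ} {c : V → Fin k}
    (hc : G.IsMajorityDominatorColoring c) : G.Colorable k :=
  ⟨Coloring.mk c fun huv => hc.1 _ _ huv⟩

theorem Colorable.exists_isMajorityDominatorColoring {k : ℕ} (hG : G.Colorable k)
    (hw : (G.neighborSet w)ᶜ.encard ≤ 2) :
    ∃ c : V → Fin k, G.IsMajorityDominatorColoring c := by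
  classical
  obtain ⟨C⟩ := hG
  set C' := C.mergeNonNeighbors w (isIndepSet_compl_neighborSet hw)
  have hclass : {u | C' u = C w} = (G.neighborSet w)ᶜ :=
    Set.ext (C.mergeNonNeighbors_eq_iff _)
  have hfin : (G.neighborSet w)ᶜ.Finite := Set.finite_of_encard_le_coe hw
  have hcard : (G.neighborSet w)ᶜ.ncard ≤ 2 := (Set.encard_le_coe_iff_finite_ncard_le.mp hw).2
  refine ⟨C', fun u v huv => C'.valid huv, fun v => ⟨C w, ?_, ?_⟩⟩
  · exact hclass ▸ ⟨w, G.irrefl⟩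
  · have hdom : {u | C' u = C w ∧ (u = v ∨ G.Adj v u)}.Nonempty := by
      by_cases hv : G.Adj w v
      · exact ⟨w, (C.mergeNonNeighbors_eq_iff _ w).mpr G.irrefl, Or.inr hv.symm⟩
      · exact ⟨v, (C.mergeNonNeighbors_eq_iff _ v).mpr hv, Or.inl rfl⟩
    have hdom_pos := (Set.ncard_pos (hfin.subset fun u hu => hclass ▸ hu.1)).mpr hdom
    rw [hclass]
    omega

theorem majorityDominatorChromaticNumber_eq_chromaticNumber [Fintype V]
    (hw : (G.neighborSet w)ᶜ.encard ≤ 2) :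
    (G.majorityDominatorChromaticNumber : ℕ∞) = G.chromaticNumber := by
  have hcolorings :
      {k | ∃ c : V → Fin k, G.IsMajorityDominatorColoring c} = {k | G.Colorable k} :=
    Set.ext fun _ =>
      ⟨fun ⟨_, hc⟩ => hc.colorable, fun h => h.exists_isMajorityDominatorColoring hw⟩
  rw [G.colorable_of_fintype.chromaticNumber_eq_sInf, majorityDominatorChromaticNumber,
    hcolorings]

end SimpleGraph

theorem md_eq_chromatic_of_maxDegree_ge_card_sub_two {V : Type*} [Fintype V]
    (G : SimpleGraph V) [DecidableRel G.Adj] (hG : G.Connected)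
    (hΔ : Fintype.card V - 2 ≤ G.maxDegree) :
    (G.majorityDominatorChromaticNumber : ℕ∞) = G.chromaticNumber := by
  have := hG.nonempty
  obtain ⟨w, hw⟩ := G.exists_maximal_degree_vertex
  apply majorityDominatorChromaticNumber_eq_chromaticNumber (w := w)
  rw [encard_compl_neighborSet]
  exact_mod_cast (by omega : Fintype.card V - G.degree w ≤ 2)
end

section
/- In any majority dominator coloring of the path P_n using the minimum number χ_md(P_n) of colors, at most two colors appear on at least five vertices each. -/
/-!
A color class that majority-dominates a vertex `v` of a path has at most twice as many elements
as it has in `N[v]`, and a proper coloring puts at most two vertices of one class into `N[v]`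
(either `v` alone, or some of its at most two neighbours). So classes with at least five
vertices dominate nothing. If there were three of them, recoloring their union with two of
their colors along the bipartition of the path would keep the coloring proper and majority
dominating while freeing the third color, contradicting minimality.
-/

open SimpleGraph

namespace SimpleGraph

variable {V α : Type*} (G : SimpleGraph V)

def ColorClassMajorityDominates (c : V → α) (v : V) (a : α) : Prop :=
  {u | c u = a}.ncard ≤ 2 * {u | c u = a ∧ (u = v ∨ G.Adj v u)}.ncard

open Classical in
noncomputable def mergeClasses (c : V → α) (S : Set α) (b : V → Bool) (i j : α) : V → α :=
  fun u => if c u ∈ S then (bif b u then i else j) else c u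

variable {G}

theorem ncard_colorClass_inter_closedNbhd_le [Finite V] {c : V → α}
    (hc : ∀ u w, G.Adj u w → c u ≠ c w) (v : V) (a : α) :
    {u | c u = a ∧ (u = v ∨ G.Adj v u)}.ncard ≤ max 1 (G.neighborSet v).ncard := by
  by_cases hv : c v = a
  · refine le_max_of_le_left ?_
    calc _ ≤ ({v} : Set V).ncard := Set.ncard_le_ncard fun u hu =>
          hu.2.resolve_right fun hadj => hc v u hadj (hv.trans hu.1.symm)
      _ = 1 := Set.ncard_singleton v
  · refine le_max_of_le_right (Set.ncard_le_ncard ?_)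
    rintro u ⟨hu, rfl | hadj⟩
    · exact absurd hu hv
    · exact hadj

theorem ColorClassMajorityDominates.ncard_le [Finite V] {c : V → α} {v : V} {a : α}
    (hc : ∀ u w, G.Adj u w → c u ≠ c w) (h : G.ColorClassMajorityDominates c v a) :
    {u | c u = a}.ncard ≤ 2 * max 1 (G.neighborSet v).ncard :=
  h.trans (Nat.mul_le_mul_left 2 (ncard_colorClass_inter_closedNbhd_le hc v a))

section mergeClasses

variable {c : V → α} {S : Set α} {i j : α}

theorem mergeClasses_of_mem (b : V → Bool) {u : V} (hu : c u ∈ S) :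
    mergeClasses c S b i j u = bif b u then i else j :=
  if_pos hu

theorem mergeClasses_of_notMem (b : V → Bool) {u : V} (hu : c u ∉ S) :
    mergeClasses c S b i j u = c u :=
  if_neg hu

theorem mergeClasses_mem_iff (hi : i ∈ S) (hj : j ∈ S) (b : V → Bool) (u : V) :
    mergeClasses c S b i j u ∈ S ↔ c u ∈ S := by
  by_cases hu : c u ∈ S
  · rw [mergeClasses_of_mem b hu]
    exact iff_of_true (by cases b u <;> assumption) hu
  · rw [mergeClasses_of_notMem b hu]

theorem mergeClasses_adj_ne (hc : ∀ u w, G.Adj u w → c u ≠ c w) (b : G.Coloring Bool)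
    (hij : i ≠ j) (hi : i ∈ S) (hj : j ∈ S) (u w : V) (huw : G.Adj u w) :
    mergeClasses c S b i j u ≠ mergeClasses c S b i j w := by
  have hmem := mergeClasses_mem_iff (c := c) hi hj b
  by_cases hu : c u ∈ S <;> by_cases hw : c w ∈ S
  · rw [mergeClasses_of_mem b hu, mergeClasses_of_mem b hw]
    have hb := b.valid huw
    revert hb
    cases b u <;> cases b w <;> simp [hij, hij.symm]
  · exact fun h => hw ((hmem w).1 (h ▸ (hmem u).2 hu))
  · exact fun h => hu ((hmem u).1 (h ▸ (hmem w).2 hw))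
  · rw [mergeClasses_of_notMem b hu, mergeClasses_of_notMem b hw]
    exact hc u w huw

theorem mergeClasses_eq_iff_of_notMem (hi : i ∈ S) (hj : j ∈ S) (b : V → Bool) {a : α}
    (ha : a ∉ S) (u : V) : mergeClasses c S b i j u = a ↔ c u = a := by
  by_cases hu : c u ∈ S
  · exact iff_of_false (fun h => ha (h ▸ (mergeClasses_mem_iff hi hj b u).2 hu))
      (fun h => ha (h ▸ hu))
  · rw [mergeClasses_of_notMem b hu]

theorem mergeClasses_ne (b : V → Bool) {l : α} (hl : l ∈ S) (hil : i ≠ l) (hjl : j ≠ l)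
    (u : V) : mergeClasses c S b i j u ≠ l := by
  by_cases hu : c u ∈ S
  · rw [mergeClasses_of_mem b hu]
    cases b u <;> assumption
  · rw [mergeClasses_of_notMem b hu]
    rintro rfl
    exact hu hl

end mergeClasses

theorem IsMajorityDominatorColoring.of_colorClass_iff {k : ℕ} {c c' : V → Fin k}
    (hc : G.IsMajorityDominatorColoring c) (hc' : ∀ u w, G.Adj u w → c' u ≠ c' w)
    (hclass : ∀ v a, G.ColorClassMajorityDominates c v a → ∀ u, c' u = a ↔ c u = a) :
    G.IsMajorityDominatorColoring c' := by
  refine ⟨hc', fun v => ?_⟩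
  obtain ⟨a, hne, hdom⟩ := hc.2 v
  have e := hclass v a hdom
  exact ⟨a, by simpa only [e] using hne, by simpa only [e] using hdom⟩

theorem IsMajorityDominatorColoring.of_comp_injective {k m : ℕ} {f : Fin m → Fin k}
    (hf : f.Injective) {c : V → Fin m} (hc : G.IsMajorityDominatorColoring (f ∘ c)) :
    G.IsMajorityDominatorColoring c := by
  refine ⟨fun u w huw e => hc.1 u w huw (congrArg f e), fun v => ?_⟩
  obtain ⟨a, ⟨u, rfl⟩, hdom⟩ := hc.2 v
  have e : ∀ w, f (c w) = f (c u) ↔ c w = c u := fun _ => hf.eq_iff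
  exact ⟨c u, ⟨u, rfl⟩, by simpa only [Function.comp_apply, e] using hdom⟩

theorem majorityDominatorChromaticNumber_le {k : ℕ} {c : V → Fin k}
    (hc : G.IsMajorityDominatorColoring c) : G.majorityDominatorChromaticNumber ≤ k :=
  Nat.sInf_le ⟨c, hc⟩

theorem IsMajorityDominatorColoring.majorityDominatorChromaticNumber_lt {k : ℕ}
    {c : V → Fin k} (hc : G.IsMajorityDominatorColoring c) {l : Fin k} (hl : ∀ u, c u ≠ l) :
    G.majorityDominatorChromaticNumber < k := by
  obtain ⟨m, rfl⟩ : ∃ m, k = m + 1 := ⟨k - 1, by have := l.pos; omega⟩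
  choose c' hc' using fun u => Fin.exists_succAbove_eq (hl u)
  have hcomp : l.succAbove ∘ c' = c := funext hc'
  calc _ ≤ m := majorityDominatorChromaticNumber_le
          ((hcomp ▸ hc).of_comp_injective Fin.succAbove_right_injective)
    _ < m + 1 := m.lt_succ_self

theorem pathGraph_ncard_neighborSet_le_two {n : ℕ} (v : Fin n) :
    ((pathGraph n).neighborSet v).ncard ≤ 2 := by
  calc _ ≤ (Set.univ : Set Bool).ncard :=
        Set.ncard_le_ncard_of_injOn (fun u => decide (u < v)) (fun _ _ => trivial) ?_
    _ = 2 := by simp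
  intro a ha b hb hab
  simp only [mem_neighborSet, pathGraph_adj, decide_eq_decide, Fin.lt_def] at ha hb hab
  grind

theorem pathGraph_ncard_colorClass_le_four {n : ℕ} {c : Fin n → α}
    (hc : ∀ u w, (pathGraph n).Adj u w → c u ≠ c w) {v : Fin n} {a : α}
    (h : (pathGraph n).ColorClassMajorityDominates c v a) : {u | c u = a}.ncard ≤ 4 := by
  have := pathGraph_ncard_neighborSet_le_two v
  have := h.ncard_le hc
  omega

end SimpleGraph

theorem path_md_coloring_at_most_two_big_classes (n k : ℕ)
    (hk : k = (pathGraph n).majorityDominatorChromaticNumber)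
    (c : Fin n → Fin k) (hc : (pathGraph n).IsMajorityDominatorColoring c) :
    {i : Fin k | 5 ≤ {u | c u = i}.ncard}.ncard ≤ 2 := by
  set S := {i : Fin k | 5 ≤ {u | c u = i}.ncard}
  by_contra hbig
  obtain ⟨i, hi, j, hj, l, hl, hij, hil, hjl⟩ :=
    (Set.two_lt_ncard (Set.toFinite S)).mp (not_le.mp hbig)
  have hc' := hc.of_colorClass_iff (c' := mergeClasses c S (pathGraph.bicoloring n) i j)
    (mergeClasses_adj_ne hc.1 _ hij hi hj) fun _ _ hdom =>
      mergeClasses_eq_iff_of_notMem hi hj _ fun ha =>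
        (pathGraph_ncard_colorClass_le_four hc.1 hdom).not_gt ha
  have := hc'.majorityDominatorChromaticNumber_lt (mergeClasses_ne _ hl hil hjl)
  omega
end
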